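/- arXiv:1708.00967 — 3 statements merged into one kernel-verified Lean document; each statement's English description precedes it below -/
import Mathlib

section
/- Let P_m = X_1 X_2 ⋯ X_m where X_1, …, X_m are independent random 2n×2n matrices, with X_i the top-left 2n×2n sub-block of a Haar-distributed (L_i+2n)×(L_i+2n) real orthogonal matrix. Then E[Tr(P_m²)] = ∏_{i=1}^m 2n/(L_i + 2n). -/
/-!
Write `Tr(P²) = ∑_{a,b} P_ab P_ba` and expand every entry of `P = X_1 ⋯ X_m` as a sum over
index paths. Then `Tr(P²)` is a sum over pairs of paths `p, q` (glued into a closed loop) of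
`∏_k X_k(p_k, p_{k+1}) X_k(q_k, q_{k+1})`, where the `k`-th factor depends on the `k`-th matrix
only, so by independence its expectation is a product of second moments. Left invariance of Haar
measure under a sign flip of one row and under row swaps, together with orthonormality of the
columns, gives `E[Q_kj Q_k'j'] = δ_kk' δ_jj' / M` for a Haar orthogonal `M × M` matrix `Q`.
Hence only the pairs `p = q` survive; these are the `(2n)^m` paths with `p_0 = p_m`, each
contributing `∏_i 1/(L_i + 2n)`.
-/

open MeasureTheory Matrix

/-- Borel measurable structure on the orthogonal group. -/
noncomputable instance (M : ℕ) : MeasurableSpace (Matrix.orthogonalGroup (Fin M) ℝ) :=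
  borel _

instance (M : ℕ) : BorelSpace (orthogonalGroup (Fin M) ℝ) := ⟨rfl⟩

open Finset

namespace Matrix.orthogonalGroup

variable {M : ℕ} (μ : Measure (orthogonalGroup (Fin M) ℝ))

theorem continuous_val_apply (k j : Fin M) :
    Continuous fun Q : orthogonalGroup (Fin M) ℝ => Q.val k j :=
  continuous_subtype_val.matrix_elem k j

theorem integrable_val_apply_mul_val_apply [IsFiniteMeasure μ] (k j k' j' : Fin M) :
    Integrable (fun Q : orthogonalGroup (Fin M) ℝ => Q.val k j * Q.val k' j') μ :=
  .of_bound ((continuous_val_apply k j).mul (continuous_val_apply k' j')).aestronglyMeasurable 1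
    (ae_of_all _ fun Q => by
      rw [norm_mul]
      exact mul_le_one₀ (entry_norm_bound_of_unitary Q.2 k j) (norm_nonneg _)
        (entry_norm_bound_of_unitary Q.2 k' j'))

variable [μ.IsMulLeftInvariant]

theorem integral_val_apply_mul_val_apply_of_ne {k k' : Fin M} (hk : k ≠ k') (j j' : Fin M) :
    ∫ Q, Q.val k j * Q.val k' j' ∂μ = 0 := by
  let d : Fin M → ℝ := fun t => if t = k then -1 else 1
  have hd : diagonal d ∈ orthogonalGroup (Fin M) ℝ := by
    rw [mem_orthogonalGroup_iff, diagonal_transpose, diagonal_mul_diagonal, ← diagonal_one]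
    congr 1
    ext t
    simp only [d]
    split_ifs <;> norm_num
  have hflip := integral_mul_left_eq_self (μ := μ) (fun Q => Q.val k j * Q.val k' j') ⟨_, hd⟩
  simp only [Submonoid.coe_mul, diagonal_mul, d, if_pos, if_neg hk.symm, neg_mul, one_mul,
    integral_neg] at hflip
  linarith

theorem integral_val_apply_mul_val_apply_perm (σ : Equiv.Perm (Fin M)) (k j k' j' : Fin M) :
    ∫ Q, Q.val (σ k) j * Q.val (σ k') j' ∂μ = ∫ Q, Q.val k j * Q.val k' j' ∂μ := by
  have hσ : σ.permMatrix ℝ ∈ orthogonalGroup (Fin M) ℝ := by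
    rw [mem_orthogonalGroup_iff, transpose_permMatrix, ← permMatrix_mul, inv_mul_cancel,
      permMatrix_one]
  simpa [PEquiv.toMatrix_toPEquiv_mul] using
    integral_mul_left_eq_self (μ := μ) (fun Q => Q.val k j * Q.val k' j') ⟨_, hσ⟩

theorem integral_val_apply_mul_val_apply [IsProbabilityMeasure μ] (k j k' j' : Fin M) :
    ∫ Q, Q.val k j * Q.val k' j' ∂μ = if k = k' ∧ j = j' then (M : ℝ)⁻¹ else 0 := by
  obtain rfl | hk := eq_or_ne k k'
  swap
  · simp [hk, integral_val_apply_mul_val_apply_of_ne μ hk]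
  have hcol : ∑ t, ∫ Q, Q.val t j * Q.val t j' ∂μ = if j = j' then 1 else 0 := by
    rw [← integral_finsetSum _ fun t _ => integrable_val_apply_mul_val_apply μ t j t j']
    have horth (Q : orthogonalGroup (Fin M) ℝ) :
        ∑ t, Q.val t j * Q.val t j' = (1 : Matrix (Fin M) (Fin M) ℝ) j j' := by
      rw [← Q.2.1]
      simp [mul_apply]
    simp [horth, one_apply]
  have hrow (t : Fin M) :
      ∫ Q, Q.val t j * Q.val t j' ∂μ = ∫ Q, Q.val k j * Q.val k j' ∂μ := by
    simpa using integral_val_apply_mul_val_apply_perm μ (Equiv.swap k t) k j k j'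
  simp only [hrow, Finset.sum_const, Finset.card_univ, Fintype.card_fin, nsmul_eq_mul] at hcol
  have hM : (M : ℝ) ≠ 0 := Nat.cast_ne_zero.2 (Fin.pos k).ne'
  simp only [true_and]
  split_ifs at hcol ⊢
  · exact (inv_eq_of_mul_eq_one_right hcol).symm
  · exact (mul_eq_zero.1 hcol).resolve_left hM

end Matrix.orthogonalGroup

namespace Matrix

variable {ι R : Type*} {m : ℕ}

def pathProd [CommMonoid R] (A : Fin m → Matrix ι ι R) (p : Fin (m + 1) → ι) : R :=
  ∏ k, A k (p k.castSucc) (p k.succ)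

variable [Fintype ι] [DecidableEq ι] [CommSemiring R]

theorem list_prod_ofFn_apply (A : Fin m → Matrix ι ι R) (a b : ι) :
    (List.ofFn A).prod a b =
      ∑ p : Fin (m + 1) → ι, if p 0 = a ∧ p (Fin.last m) = b then pathProd A p else 0 := by
  induction m generalizing a with
  | zero =>
    rw [← (Equiv.funUnique (Fin 1) ι).symm.sum_comp]
    simp [pathProd, one_apply, ite_and]
  | succ m ih =>
    rw [List.ofFn_succ, List.prod_cons, mul_apply]
    simp_rw [ih, Finset.mul_sum]
    rw [← (Fin.consEquiv fun _ => ι).sum_comp, Fintype.sum_prod_type, Finset.sum_comm]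
    conv_rhs => rw [Finset.sum_comm]
    refine Finset.sum_congr rfl fun g _ => ?_
    simp [pathProd, Fin.prod_univ_succ, ite_and, Fin.cons_last]

theorem sum_sum_list_prod_ofFn_apply_mul (A : Fin m → Matrix ι ι R) (F : ι → ι → R) :
    ∑ a, ∑ b, (List.ofFn A).prod a b * F a b =
      ∑ p : Fin (m + 1) → ι, pathProd A p * F (p 0) (p (Fin.last m)) := by
  simp_rw [list_prod_ofFn_apply, Finset.sum_mul, ite_mul, zero_mul]
  rw [Finset.sum_congr rfl fun a _ => Finset.sum_comm, Finset.sum_comm]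
  simp [ite_and, Finset.sum_ite_eq]

theorem trace_list_prod_ofFn_sq (A : Fin m → Matrix ι ι R) :
    trace ((List.ofFn A).prod ^ 2) =
      ∑ p : Fin (m + 1) → ι, ∑ q with q 0 = p (Fin.last m) ∧ q (Fin.last m) = p 0,
        pathProd A p * pathProd A q := by
  simp only [sq, trace, diag_apply, mul_apply]
  rw [sum_sum_list_prod_ofFn_apply_mul A fun a b => (List.ofFn A).prod b a]
  simp only [list_prod_ofFn_apply, Finset.mul_sum, Finset.sum_filter, mul_ite, mul_zero]

end Matrix

namespace Fin

variable {α : Type*} {m : ℕ}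

theorem eq_iff_forall_castSucc_succ (hm : 0 < m) {p q : Fin (m + 1) → α} :
    p = q ↔ ∀ k : Fin m, p k.castSucc = q k.castSucc ∧ p k.succ = q k.succ := by
  refine ⟨fun h k => h ▸ ⟨rfl, rfl⟩, fun h => funext fun j => ?_⟩
  induction j using Fin.cases with
  | zero => exact (h ⟨0, hm⟩).1
  | succ k => exact (h k).2

theorem card_filter_apply_zero_eq_apply_last [Fintype α] [DecidableEq α] (hm : 0 < m) :
    #{p : Fin (m + 1) → α | p 0 = p (Fin.last m)} = Fintype.card α ^ m := by
  rw [Finset.card_filter, ← (Fin.snocEquiv fun _ => α).sum_comp, Fintype.sum_prod_type,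
    Finset.sum_comm]
  have h0 (x : α) (g : Fin m → α) : Fin.snocEquiv (fun _ => α) (x, g) 0 = g ⟨0, hm⟩ :=
    Fin.snoc_castSucc (α := fun _ => α) (i := ⟨0, hm⟩) ..
  have hlast (x : α) (g : Fin m → α) : Fin.snocEquiv (fun _ => α) (x, g) (Fin.last m) = x :=
    Fin.snoc_last (α := fun _ => α) ..
  simp [h0, hlast]

end Fin

section IsotropicSecondMoments

variable {𝕜 ι : Type*} [RCLike 𝕜] {m : ℕ} {E : Fin m → Type*}
  [∀ k, MeasurableSpace (E k)] {μ : ∀ k, Measure (E k)} [∀ k, SigmaFinite (μ k)]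
  (X : ∀ k, E k → Matrix ι ι 𝕜)

theorem integrable_pathProd_mul_pathProd
    (hint : ∀ k a b c d, Integrable (fun x => X k x a b * X k x c d) (μ k))
    (p q : Fin (m + 1) → ι) :
    Integrable (fun ω : ∀ k, E k =>
      pathProd (fun k => X k (ω k)) p * pathProd (fun k => X k (ω k)) q) (Measure.pi μ) := by
  simp_rw [pathProd, ← Finset.prod_mul_distrib]
  exact .fintype_prod_dep fun k => hint k _ _ _ _

theorem integral_pathProd_mul_pathProd [DecidableEq ι] (hm : 0 < m) (s : Fin m → 𝕜)
    (hmom : ∀ k a b c d,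
      ∫ x, X k x a b * X k x c d ∂μ k = if a = c ∧ b = d then s k else 0)
    (p q : Fin (m + 1) → ι) :
    ∫ ω, pathProd (fun k => X k (ω k)) p * pathProd (fun k => X k (ω k)) q ∂Measure.pi μ =
      if p = q then ∏ k, s k else 0 := by
  simp_rw [pathProd, ← Finset.prod_mul_distrib]
  rw [integral_fintype_prod_eq_prod fun k x =>
    X k x (p k.castSucc) (p k.succ) * X k x (q k.castSucc) (q k.succ)]
  simp [hmom, Finset.prod_ite_zero, Fin.eq_iff_forall_castSucc_succ hm]

theorem integral_trace_list_prod_ofFn_sq [Fintype ι] [DecidableEq ι] (hm : 0 < m)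
    (s : Fin m → 𝕜)
    (hint : ∀ k a b c d, Integrable (fun x => X k x a b * X k x c d) (μ k))
    (hmom : ∀ k a b c d,
      ∫ x, X k x a b * X k x c d ∂μ k = if a = c ∧ b = d then s k else 0) :
    ∫ ω, trace ((List.ofFn fun k => X k (ω k)).prod ^ 2) ∂Measure.pi μ =
      Fintype.card ι ^ m * ∏ k, s k := by
  simp_rw [trace_list_prod_ofFn_sq]
  rw [integral_finsetSum _ fun p _ => integrable_finsetSum _ fun q _ =>
    integrable_pathProd_mul_pathProd X hint p q]
  simp_rw [integral_finsetSum _ fun q _ => integrable_pathProd_mul_pathProd X hint _ q,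
    integral_pathProd_mul_pathProd X hm s hmom, Finset.sum_ite_eq, Finset.mem_filter]
  have hloop (p : Fin (m + 1) → ι) :
      p 0 = p (Fin.last m) ∧ p (Fin.last m) = p 0 ↔ p 0 = p (Fin.last m) :=
    ⟨And.left, fun h => ⟨h, h.symm⟩⟩
  simp only [Finset.mem_univ, true_and, hloop]
  rw [← Finset.sum_filter, Finset.sum_const, Fin.card_filter_apply_zero_eq_apply_last hm,
    nsmul_eq_mul, Nat.cast_pow]

end IsotropicSecondMoments

theorem expectation_trace_sq_product_truncated_orthogonal_general (n m : ℕ) (hm : 0 < m)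
    (L : Fin m → ℕ)
    (μ : ∀ i : Fin m, Measure (Matrix.orthogonalGroup (Fin (L i + 2 * n)) ℝ))
    [∀ i, IsProbabilityMeasure (μ i)]
    (hinv : ∀ (i : Fin m) (U : Matrix.orthogonalGroup (Fin (L i + 2 * n)) ℝ),
      Measure.map (fun Q => U * Q) (μ i) = μ i) :
    (∫ ω : ∀ i : Fin m, Matrix.orthogonalGroup (Fin (L i + 2 * n)) ℝ,
        Matrix.trace
          ((List.ofFn (fun i : Fin m =>
            Matrix.submatrix
              ((ω i : Matrix (Fin (L i + 2 * n)) (Fin (L i + 2 * n)) ℝ))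
              (Fin.castLE (Nat.le_add_left (2 * n) (L i)))
              (Fin.castLE (Nat.le_add_left (2 * n) (L i))))).prod ^ 2)
        ∂(Measure.pi μ))
      = ∏ i : Fin m, (2 * n : ℝ) / (L i + 2 * n) := by
  have (i : Fin m) : (μ i).IsMulLeftInvariant := ⟨hinv i⟩
  let e (i : Fin m) := Fin.castLE (Nat.le_add_left (2 * n) (L i))
  let X (i : Fin m) (Q : orthogonalGroup (Fin (L i + 2 * n)) ℝ) := Q.val.submatrix (e i) (e i)
  have hmom (i : Fin m) (a b c d : Fin (2 * n)) :
      ∫ Q, X i Q a b * X i Q c d ∂μ i =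
        if a = c ∧ b = d then ((L i + 2 * n : ℕ) : ℝ)⁻¹ else 0 := by
    simp [X, e, orthogonalGroup.integral_val_apply_mul_val_apply]
  have hint (i : Fin m) (a b c d : Fin (2 * n)) :
      Integrable (fun Q => X i Q a b * X i Q c d) (μ i) :=
    orthogonalGroup.integrable_val_apply_mul_val_apply (μ i) _ _ _ _
  refine (integral_trace_list_prod_ofFn_sq X hm _ hint hmom).trans ?_
  simp [div_eq_mul_inv, Finset.prod_mul_distrib]

/-- Let `P_m = X_1 ⋯ X_m` where the `X_i` are independent `2n × 2n` top-left sub-blocks of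
Haar distributed `(L_i+2n) × (L_i+2n)` real orthogonal matrices (modelled by the product of
left-invariant probability measures on the orthogonal groups). Then
`E[Tr(P_m²)] = ∏_{i=1}^m 2n/(L_i+2n)`. -/
theorem expectation_trace_sq_product_truncated_orthogonal (n m : ℕ) (hn : 0 < n) (hm : 0 < m)
    (L : Fin m → ℕ)
    (μ : ∀ i : Fin m, Measure (Matrix.orthogonalGroup (Fin (L i + 2 * n)) ℝ))
    [∀ i, IsProbabilityMeasure (μ i)]
    (hinv : ∀ (i : Fin m) (U : Matrix.orthogonalGroup (Fin (L i + 2 * n)) ℝ),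
      Measure.map (fun Q => U * Q) (μ i) = μ i) :
    (∫ ω : ∀ i : Fin m, Matrix.orthogonalGroup (Fin (L i + 2 * n)) ℝ,
        Matrix.trace
          ((List.ofFn (fun i : Fin m =>
            Matrix.submatrix
              ((ω i : Matrix (Fin (L i + 2 * n)) (Fin (L i + 2 * n)) ℝ))
              (Fin.castLE (Nat.le_add_left (2 * n) (L i)))
              (Fin.castLE (Nat.le_add_left (2 * n) (L i))))).prod ^ 2)
        ∂(Measure.pi μ))
      = ∏ i : Fin m, (2 * n : ℝ) / (L i + 2 * n) :=
  expectation_trace_sq_product_truncated_orthogonal_general n m hm L μ hinv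
end

section
/- For positive even integer L₁ and positive integers j, k, the double-sum/hypergeometric reduction holds: Γ(k)/Γ(k+L₁/2) · Γ(j−1/2)/Γ(j−1/2+L₁/2) − (1/(k Γ(L₁/2))) · Γ(j+k−1/2)/Γ(j+k−1/2+L₁/2) · ₃F₂(k, j+k−1/2, 1−L₁/2; k+1, j+k−1/2+L₁/2; 1) equals Γ(j−1/2)/(Γ(L₁/2)Γ(L₁+j+k−3/2)) · Σ_{ℓ=1}^{L₁/2} Γ(j+k+ℓ−3/2)Γ(L₁−ℓ)/(Γ(j+ℓ−1/2)Γ(L₁/2−ℓ+1)). -/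
/-!
Put `m = L₁/2`, `n = m - 1`, `x = j - 1/2`. Every Gamma quotient in the identity is a Pochhammer
symbol, and the terminating `₃F₂` is the alternating binomial sum `∑ᵢ (-1)ⁱ (n choose i) f (k + i)`
of `f t = 1 / (t (x + t)ₘ)`, i.e. `(-1)ⁿ` times the `n`-th forward difference of `f` at `k`.
The same difference of `t ↦ 1 / (t (x)ₘ)` is `n! / ((k)ₙ₊₁ (x)ₘ)`. The difference of these two
functions telescopes into `∑_{l=1}^m 1 / ((x)ₗ (x + t + l - 1)_{m+1-l})`, and since the `n`-th
forward difference of `t ↦ 1 / (t)_M` is `(-1)ⁿ (M)ₙ / (t)_{M+n}`, differencing termwise gives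
exactly the finite Gamma sum.
-/

open Real Finset

/-- The rising factorial (Pochhammer symbol) `(a)_ℓ` for real `a`. -/
noncomputable def poch (a : ℝ) (l : ℕ) : ℝ := (ascPochhammer ℝ l).eval a

/-- The (terminating) hypergeometric sum `₃F₂(a₁,a₂,a₃;b₁,b₂;1)`. -/
noncomputable def threeFtwo (a₁ a₂ a₃ b₁ b₂ : ℝ) : ℝ :=
  ∑' l : ℕ, poch a₁ l * poch a₂ l * poch a₃ l / (poch b₁ l * poch b₂ l * Nat.factorial l)

open Nat Polynomial fwdDiff

lemma poch_zero (a : ℝ) : poch a 0 = 1 := by simp [poch]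

lemma poch_one (a : ℝ) : poch a 1 = a := by simp [poch]

lemma poch_succ_right (a : ℝ) (n : ℕ) : poch a (n + 1) = poch a n * (a + n) :=
  ascPochhammer_succ_eval n a

lemma poch_succ_left (a : ℝ) (n : ℕ) : poch a (n + 1) = a * poch (a + 1) n := by
  simp [poch, ascPochhammer_succ_left, eval_comp]

lemma poch_add (a : ℝ) (s t : ℕ) : poch a (s + t) = poch a s * poch (a + s) t := by
  simp [poch, ← ascPochhammer_mul, eval_comp]

lemma poch_pos {a : ℝ} (ha : 0 < a) (n : ℕ) : 0 < poch a n :=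
  ascPochhammer_pos n a ha

lemma one_poch (n : ℕ) : poch 1 n = n ! := ascPochhammer_eval_one ℝ n

lemma poch_neg_natCast (n l : ℕ) : poch (-n) l = (-1) ^ l * (l ! * n.choose l) := by
  rw [poch, ascPochhammer_eval_neg_eq_descPochhammer, descPochhammer_eval_eq_descFactorial,
    descFactorial_eq_factorial_mul_choose]
  push_cast
  ring

lemma poch_neg_natCast_of_lt {n l : ℕ} (h : n < l) : poch (-n) l = 0 :=
  ascPochhammer_eval_neg_coe_nat_of_lt h

lemma Gamma_add_nat {x : ℝ} (hx : 0 < x) (n : ℕ) : Gamma (x + n) = Gamma x * poch x n := by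
  induction n with
  | zero => simp [poch_zero]
  | succ n ih =>
    rw [Nat.cast_succ, ← add_assoc, Gamma_add_one (by positivity), ih, poch_succ_right]
    ring

lemma Gamma_div_Gamma_add_nat {a : ℝ} (ha : 0 < a) (n : ℕ) :
    Gamma a / Gamma (a + n) = (poch a n)⁻¹ := by
  rw [Gamma_add_nat ha, div_mul_cancel_left₀ (Gamma_pos_of_pos ha).ne']

lemma fwdDiff_iter_inv_poch (M n : ℕ) {a : ℝ} (ha : 0 < a) :
    Δ_[1] ^[n] (fun t ↦ (poch t M)⁻¹) a = (-1) ^ n * poch M n / poch a (M + n) := by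
  induction n generalizing a with
  | zero => simp [poch_zero]
  | succ n ih =>
    have hstep : poch a (M + n + 1) = a * poch (a + 1) (M + n) := poch_succ_left a _
    have hlast : poch a (M + n + 1) = poch a (M + n) * (a + ↑(M + n)) := poch_succ_right a _
    have h₀ := poch_pos ha (M + n)
    have h₁ := poch_pos (show 0 < a + 1 by positivity) (M + n)
    rw [Function.iterate_succ_apply', fwdDiff, ih ha, ih (by positivity), ← add_assoc,
      poch_succ_right (M : ℝ), hstep]
    rw [hstep] at hlast
    field_simp
    push_cast at hlast ⊢
    linear_combination -(poch M n * (-1) ^ n) * hlast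

lemma sum_neg_one_pow_mul_choose_mul_inv_poch (M n : ℕ) {a : ℝ} (ha : 0 < a) :
    ∑ i ∈ range (n + 1), (-1) ^ i * n.choose i * (poch (a + i) M)⁻¹ =
      poch M n / poch a (M + n) := by
  calc ∑ i ∈ range (n + 1), (-1) ^ i * n.choose i * (poch (a + i) M)⁻¹
      = (-1) ^ n * Δ_[1] ^[n] (fun t ↦ (poch t M)⁻¹) a := by
        rw [fwdDiff_iter_eq_sum_shift, mul_sum]
        refine sum_congr rfl fun i hi ↦ ?_
        obtain ⟨d, rfl⟩ : ∃ d, n = i + d := ⟨n - i, by grind⟩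
        have hsq : ((-1 : ℝ) ^ d) ^ 2 = 1 := by rw [← pow_mul, pow_mul', neg_one_sq, one_pow]
        rw [zsmul_eq_mul, nsmul_one, Nat.add_sub_cancel_left]
        push_cast
        linear_combination -((-1) ^ i * ((i + d).choose i : ℝ) * (poch (a + i) M)⁻¹) * hsq
    _ = poch M n / poch a (M + n) := by
        rw [fwdDiff_iter_inv_poch M n ha, ← mul_div_assoc, ← mul_assoc, ← pow_add,
          Even.neg_one_pow ⟨n, rfl⟩, one_mul]

lemma inv_mul_poch_sub_inv_mul_poch_eq_sum {x t : ℝ} (hx : 0 < x) (ht : 0 < t) (m : ℕ) :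
    (t * poch x m)⁻¹ - (t * poch (x + t) m)⁻¹ =
      ∑ l ∈ Icc 1 m, (poch x l)⁻¹ * (poch (x + t + l - 1) (m + 1 - l))⁻¹ := by
  set u : ℕ → ℝ := fun i ↦ (poch x i * poch (x + t + i) (m - i))⁻¹
  have hstep : ∀ i ∈ range m,
      (poch x (1 + i))⁻¹ * (poch (x + t + ↑(1 + i) - 1) (m + 1 - (1 + i)))⁻¹ =
        t⁻¹ * (u (i + 1) - u i) := by
    intro i hi
    have him : m - i = m - (i + 1) + 1 := by grind
    have hP := poch_pos hx i
    have hQ := poch_pos (show 0 < x + t + i + 1 by positivity) (m - (i + 1))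
    have hxi : 0 < x + i := by positivity
    have hxti : 0 < x + t + i := by positivity
    simp only [u]
    rw [show m + 1 - (1 + i) = m - i by grind, him, add_comm 1 i, poch_succ_right x i,
      show x + t + ↑(i + 1) - 1 = x + t + i by push_cast; ring, poch_succ_left (x + t + i),
      show x + t + ↑(i + 1) = x + t + i + 1 by push_cast; ring]
    field_simp
    ring
  rw [← Ico_add_one_right_eq_Icc, sum_Ico_eq_sum_range, add_tsub_cancel_right,
    sum_congr rfl hstep, ← mul_sum, sum_range_sub]
  simp [u, poch_zero]
  field_simp

theorem factorial_div_poch_mul_poch_sub_sum (n m : ℕ) {k x : ℝ} (hk : 0 < k) (hx : 0 < x) :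
    n ! / (poch k (n + 1) * poch x m)
        - ∑ i ∈ range (n + 1), (-1) ^ i * n.choose i * ((k + i) * poch (x + k + i) m)⁻¹ =
      ∑ l ∈ Icc 1 m, poch ↑(m + 1 - l) n / (poch x l * poch (x + k + l - 1) (m + n + 1 - l)) := by
  have hinv : n ! / poch k (n + 1) = ∑ i ∈ range (n + 1), (-1) ^ i * n.choose i * (k + i)⁻¹ := by
    simpa [poch_one, one_poch, add_comm 1 n] using
      (sum_neg_one_pow_mul_choose_mul_inv_poch 1 n hk).symm
  calc n ! / (poch k (n + 1) * poch x m)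
        - ∑ i ∈ range (n + 1), (-1) ^ i * n.choose i * ((k + i) * poch (x + k + i) m)⁻¹
      = ∑ i ∈ range (n + 1), (-1) ^ i * n.choose i *
          (((k + i) * poch x m)⁻¹ - ((k + i) * poch (x + (k + i)) m)⁻¹) := by
        rw [← div_div, hinv, sum_div, ← sum_sub_distrib]
        refine sum_congr rfl fun i _ ↦ ?_
        rw [add_assoc]
        simp only [mul_inv]
        ring
    _ = ∑ i ∈ range (n + 1), (-1) ^ i * n.choose i *
          ∑ l ∈ Icc 1 m, (poch x l)⁻¹ * (poch (x + k + l - 1 + i) (m + 1 - l))⁻¹ := by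
        refine sum_congr rfl fun i _ ↦ ?_
        rw [inv_mul_poch_sub_inv_mul_poch_eq_sum hx (by positivity)]
        congr 2 with l
        ring_nf
    _ = ∑ l ∈ Icc 1 m, (poch x l)⁻¹ *
          ∑ i ∈ range (n + 1),
            (-1) ^ i * n.choose i * (poch (x + k + l - 1 + i) (m + 1 - l))⁻¹ := by
        simp_rw [mul_sum]
        rw [sum_comm]
        refine sum_congr rfl fun l _ ↦ sum_congr rfl fun i _ ↦ ?_
        ring
    _ = _ := by
        refine sum_congr rfl fun l hl ↦ ?_
        have hl1 : (1 : ℝ) ≤ l := by exact_mod_cast (mem_Icc.mp hl).1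
        rw [sum_neg_one_pow_mul_choose_mul_inv_poch _ _ (by linarith),
          show m + 1 - l + n = m + n + 1 - l by grind]
        ring

lemma threeFtwo_neg_natCast (n m : ℕ) {k b : ℝ} (hk : 0 < k) (hb : 0 < b) :
    threeFtwo k b (-n) (k + 1) (b + m) =
      k * poch b m * ∑ i ∈ range (n + 1), (-1) ^ i * n.choose i * ((k + i) * poch (b + i) m)⁻¹ := by
  rw [threeFtwo, tsum_eq_sum (s := range (n + 1)), mul_sum]
  · refine sum_congr rfl fun l _ ↦ ?_
    have hk1 : poch (k + 1) l = poch k l * (k + l) / k := by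
      rw [eq_div_iff hk.ne', mul_comm, ← poch_succ_left, poch_succ_right]
    have hbm : poch (b + m) l = poch b l * poch (b + l) m / poch b m := by
      rw [eq_div_iff (poch_pos hb m).ne', mul_comm, ← poch_add, ← poch_add, add_comm]
    have := poch_pos hk l
    have := poch_pos hb l
    have := poch_pos hb m
    have := poch_pos (show 0 < b + l by positivity) m
    have : (0 : ℝ) < l ! := by positivity
    rw [poch_neg_natCast, hk1, hbm]
    field_simp
  · intro l hl
    rw [poch_neg_natCast_of_lt (by simpa using hl)]
    simp

lemma Gamma_quotient_eq_poch_quotient {x k : ℝ} (hx : 0 < x) (hk : 0 < k) {m l : ℕ}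
    (hl : l ∈ Icc 1 m) :
    Gamma x / Gamma (2 * m + x + k - 1) *
        (Gamma (x + k + l - 1) * Gamma (2 * m - l) / (Gamma (x + l) * Gamma (m - l + 1))) =
      poch ↑(m + 1 - l) (m - 1) / (poch x l * poch (x + k + l - 1) (m + (m - 1) + 1 - l)) := by
  obtain ⟨hl1, hlm⟩ := mem_Icc.mp hl
  have hl1' : (1 : ℝ) ≤ l := by exact_mod_cast hl1
  have hlm' : (l : ℝ) ≤ m := by exact_mod_cast hlm
  have hc : 0 < x + k + l - 1 := by linarith
  have hcast : ((m + 1 - l : ℕ) : ℝ) = m - l + 1 := by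
    push_cast [Nat.cast_sub (by omega : l ≤ m + 1)]
    ring
  have h₁ : Gamma (2 * m + x + k - 1) =
      Gamma (x + k + l - 1) * poch (x + k + l - 1) (m + (m - 1) + 1 - l) := by
    rw [← Gamma_add_nat hc]
    congr 1
    push_cast [Nat.cast_sub (by omega : l ≤ m + (m - 1) + 1), Nat.cast_sub (by omega : 1 ≤ m)]
    ring
  have h₂ : Gamma (2 * m - l) = Gamma (m - l + 1) * poch ↑(m + 1 - l) (m - 1) := by
    rw [hcast, ← Gamma_add_nat (by linarith)]
    congr 1
    push_cast [Nat.cast_sub (by omega : 1 ≤ m)]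
    ring
  have := Gamma_pos_of_pos hx
  have := Gamma_pos_of_pos hc
  have := Gamma_pos_of_pos (show 0 < (m : ℝ) - l + 1 by linarith)
  have := poch_pos hx l
  have := poch_pos hc (m + (m - 1) + 1 - l)
  rw [h₁, h₂, Gamma_add_nat hx]
  field_simp

theorem meijerG_reduction_real (m : ℕ) (hm : 0 < m) {x k : ℝ} (hx : 0 < x) (hk : 0 < k) :
    Gamma k / Gamma (k + m) * (Gamma x / Gamma (x + m)) -
        1 / (k * Gamma m) * (Gamma (x + k) / Gamma (x + k + m)) *
          threeFtwo k (x + k) (1 - m) (k + 1) (x + k + m) =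
      Gamma x / (Gamma m * Gamma (2 * m + x + k - 1)) *
        ∑ l ∈ Icc 1 m, Gamma (x + k + l - 1) * Gamma (2 * m - l) /
          (Gamma (x + l) * Gamma (m - l + 1)) := by
  obtain ⟨n, rfl⟩ : ∃ n, m = n + 1 := ⟨m - 1, by omega⟩
  have hxk : 0 < x + k := by positivity
  have hΓ : Gamma ↑(n + 1) = n ! := by rw [Nat.cast_succ, Gamma_nat_eq_factorial]
  have h3F2 := threeFtwo_neg_natCast n (n + 1) hk hxk
  have hkey := factorial_div_poch_mul_poch_sub_sum n (n + 1) hk hx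
  have hrhs : Gamma x / (Gamma ↑(n + 1) * Gamma (2 * ↑(n + 1) + x + k - 1)) *
      ∑ l ∈ Icc 1 (n + 1), Gamma (x + k + l - 1) * Gamma (2 * ↑(n + 1) - l) /
        (Gamma (x + l) * Gamma (↑(n + 1) - l + 1)) =
      (n ! : ℝ)⁻¹ * (n ! / (poch k (n + 1) * poch x (n + 1)) - ∑ i ∈ range (n + 1),
        (-1) ^ i * n.choose i * ((k + i) * poch (x + k + i) (n + 1))⁻¹) := by
    rw [hkey, hΓ, mul_sum, mul_sum]
    refine sum_congr rfl fun l hl ↦ ?_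
    have hq := Gamma_quotient_eq_poch_quotient hx hk hl
    rw [Nat.add_sub_cancel] at hq
    rw [← hq]
    ring
  rw [hrhs, show (1 : ℝ) - ↑(n + 1) = -n by push_cast; ring, h3F2, Gamma_div_Gamma_add_nat hk,
    Gamma_div_Gamma_add_nat hx, Gamma_div_Gamma_add_nat hxk, hΓ]
  have := poch_pos hk (n + 1)
  have := poch_pos hx (n + 1)
  have := poch_pos hxk (n + 1)
  field_simp

/-- For a positive even integer `L₁` and positive integers `j, k`, the hypergeometric
evaluation of the Meijer G-function reduces to a finite sum of ratios of gamma functions: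
`Γ(k)/Γ(k+L₁/2) Γ(j−1/2)/Γ(j−1/2+L₁/2) − (1/(k Γ(L₁/2))) Γ(j+k−1/2)/Γ(j+k−1/2+L₁/2)
  ₃F₂(k, j+k−1/2, 1−L₁/2; k+1, j+k−1/2+L₁/2; 1)
  = Γ(j−1/2)/(Γ(L₁/2)Γ(L₁+j+k−3/2)) Σ_{ℓ=1}^{L₁/2}
     Γ(j+k+ℓ−3/2)Γ(L₁−ℓ)/(Γ(j+ℓ−1/2)Γ(L₁/2−ℓ+1))`. -/
theorem meijerG_reduction_even (L₁ j k : ℕ) (hL : 0 < L₁) (hLeven : Even L₁)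
    (hj : 0 < j) (hk : 0 < k) :
    Real.Gamma k / Real.Gamma ((k : ℝ) + L₁ / 2) *
        (Real.Gamma ((j : ℝ) - 1 / 2) / Real.Gamma ((j : ℝ) - 1 / 2 + L₁ / 2)) -
      1 / ((k : ℝ) * Real.Gamma ((L₁ : ℝ) / 2)) *
        (Real.Gamma ((j : ℝ) + k - 1 / 2) / Real.Gamma ((j : ℝ) + k - 1 / 2 + L₁ / 2)) *
        threeFtwo k ((j : ℝ) + k - 1 / 2) (1 - (L₁ : ℝ) / 2)
          ((k : ℝ) + 1) ((j : ℝ) + k - 1 / 2 + (L₁ : ℝ) / 2)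
      = Real.Gamma ((j : ℝ) - 1 / 2) /
          (Real.Gamma ((L₁ : ℝ) / 2) * Real.Gamma ((L₁ : ℝ) + j + k - 3 / 2)) *
        ∑ l ∈ Finset.Icc 1 (L₁ / 2),
          Real.Gamma ((j : ℝ) + k + l - 3 / 2) * Real.Gamma ((L₁ : ℝ) - l) /
            (Real.Gamma ((j : ℝ) + l - 1 / 2) * Real.Gamma ((L₁ : ℝ) / 2 - l + 1)) := by
  obtain ⟨m, rfl⟩ := hLeven
  have hx : (0 : ℝ) < j - 1 / 2 := by
    have : (1 : ℝ) ≤ j := by exact_mod_cast hj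
    linarith
  have key := meijerG_reduction_real m (by omega) hx (Nat.cast_pos.mpr hk)
  rw [show (m + m) / 2 = m by omega]
  push_cast
  convert key using 3 <;> ring_nf
end

section
/- Asymptotics of the probability of all-real spectrum for a truncation: with L = cN, c > 0 fixed, log p_{N,N} = N²·(−c/4 − (1/4)log 2 − (c/2)log c − (3c²/4)log c − ((c+1)²/4)log(c+1) + (c+1/2)²log(c+1/2)) + O(N log N) as N → ∞, where p_{N,N} = ∏_{j=0}^{N−1} Γ(L+j)Γ((L+j)/2)/(Γ(L+(N+j−1)/2)Γ(L/2)). -/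
open Real Finset Filter Asymptotics

/-- `p_{N,N}` with `L = cN`:
`p_{N,N} = ∏_{j=0}^{N−1} Γ(L+j)Γ((L+j)/2)/(Γ(L+(N+j−1)/2)Γ(L/2))`. -/
noncomputable def pNN (c : ℝ) (N : ℕ) : ℝ :=
  ∏ j ∈ Finset.range N,
    Real.Gamma (c * N + j) * Real.Gamma ((c * N + j) / 2) /
      (Real.Gamma (c * N + ((N : ℝ) + j - 1) / 2) * Real.Gamma (c * N / 2))

/-- The coefficient of `N²` in the asymptotic expansion of `log p_{N,N}`. -/
noncomputable def exponent (c : ℝ) : ℝ :=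
  -c / 4 - (1 / 4) * Real.log 2 - (c / 2) * Real.log c - (3 * c ^ 2 / 4) * Real.log c -
    ((c + 1) ^ 2 / 4) * Real.log (c + 1) + (c + 1 / 2) ^ 2 * Real.log (c + 1 / 2)

/-!
Up to `O(log x)`, `log Γ(x)` is `stirlingMain x = x log x - x` (Stirling for factorials and the
monotonicity of `Γ` on `[2, ∞)`), so up to `O(N log N)` the logarithm of `p_{N,N}` is a
combination of sums of `stirlingMain` over arithmetic progressions of length `N` and step `1` or
`1/2` inside `[2, (c+1)N]`. Since `stirlingMain` is increasing with antiderivative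
`barnesMain`, each such sum is `(barnesMain b - barnesMain a) / step + O(N log N)`. Shifting the
endpoints by `1/2` costs `O(N log N)` more, and the resulting combination of values
`barnesMain (λN)` is exactly `N² exponent c`: the `N² log N` contributions cancel.
-/

theorem mul_le_sub_le_mul_of_hasDerivAt_of_monotoneOn {g G : ℝ → ℝ} {x h : ℝ} (hh : 0 ≤ h)
    (hG : ∀ y ∈ Set.Icc x (x + h), HasDerivAt G (g y) y)
    (hg : MonotoneOn g (Set.Icc x (x + h))) :
    h * g x ≤ G (x + h) - G x ∧ G (x + h) - G x ≤ h * g (x + h) := by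
  rcases hh.eq_or_lt with rfl | hpos
  · simp
  have hx : x ∈ Set.Icc x (x + h) := Set.left_mem_Icc.2 (by linarith)
  have hxh : x + h ∈ Set.Icc x (x + h) := Set.right_mem_Icc.2 (by linarith)
  obtain ⟨ξ, hξ, hslope⟩ := exists_hasDerivAt_eq_slope G g (by linarith : x < x + h)
    (fun y hy => (hG y hy).continuousAt.continuousWithinAt)
    (fun y hy => hG y (Set.Ioo_subset_Icc_self hy))
  rw [add_sub_cancel_left, eq_div_iff hpos.ne'] at hslope
  have hξ' := Set.Ioo_subset_Icc_self hξ
  constructor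
  · nlinarith [hg hx hξ' hξ.1.le]
  · nlinarith [hg hξ' hxh hξ.2.le]

theorem sum_le_mul_sub_le_sum_add {g G : ℝ → ℝ} {a m : ℝ} (hm : 0 < m)
    (hG : ∀ y, a ≤ y → HasDerivAt G (g y) y) (hg : MonotoneOn g (Set.Ici a)) (N : ℕ) :
    ∑ j ∈ range N, g (a + j / m) ≤ m * (G (a + N / m) - G a) ∧
      m * (G (a + N / m) - G a) ≤ ∑ j ∈ range N, g (a + j / m) + (g (a + N / m) - g a) := by
  induction N with
  | zero => simp
  | succ N ih =>
    have hax : a ≤ a + N / m := le_add_of_nonneg_right (by positivity)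
    obtain ⟨hlo, hhi⟩ := mul_le_sub_le_mul_of_hasDerivAt_of_monotoneOn (h := 1 / m)
      (by positivity) (fun y hy => hG y (hax.trans hy.1)) (hg.mono fun y hy => hax.trans hy.1)
    rw [Finset.sum_range_succ,
      show a + ((N + 1 : ℕ) : ℝ) / m = a + N / m + 1 / m by push_cast; ring]
    rw [← mul_le_mul_iff_of_pos_left hm, ← mul_assoc, mul_one_div_cancel hm.ne', one_mul]
      at hlo hhi
    constructor <;> linarith [ih.1, ih.2]

noncomputable def stirlingMain (x : ℝ) : ℝ := x * log x - x

/-- The leading term of `log G(x)` for the Barnes `G`-function. -/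
noncomputable def barnesMain (x : ℝ) : ℝ := x ^ 2 / 2 * log x - 3 / 4 * x ^ 2

theorem hasDerivAt_stirlingMain {x : ℝ} (hx : 0 < x) :
    HasDerivAt stirlingMain (log x) x := by
  have := ((hasDerivAt_id' x).mul (Real.hasDerivAt_log hx.ne')).sub (hasDerivAt_id' x)
  rwa [one_mul, mul_inv_cancel₀ hx.ne', add_sub_cancel_right] at this

theorem hasDerivAt_barnesMain {x : ℝ} (hx : 0 < x) :
    HasDerivAt barnesMain (stirlingMain x) x := by
  have := ((((hasDerivAt_pow 2 x).div_const 2).mul (Real.hasDerivAt_log hx.ne')).sub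
    ((hasDerivAt_pow 2 x).const_mul (3 / 4)))
  refine this.congr_deriv ?_
  simp only [stirlingMain]
  field_simp
  ring

theorem mul_log_le_stirlingMain_sub_le_mul_log {x y : ℝ} (hy : 0 < y) (hyx : y ≤ x) :
    (x - y) * log y ≤ stirlingMain x - stirlingMain y ∧
      stirlingMain x - stirlingMain y ≤ (x - y) * log x := by
  have h := mul_le_sub_le_mul_of_hasDerivAt_of_monotoneOn (g := log) (G := stirlingMain)
    (x := y) (h := x - y) (sub_nonneg.2 hyx)
    (fun t ht => hasDerivAt_stirlingMain (hy.trans_le ht.1))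
    (Real.strictMonoOn_log.monotoneOn.mono fun t ht => hy.trans_le ht.1)
  rwa [add_sub_cancel] at h

theorem monotoneOn_stirlingMain : MonotoneOn stirlingMain (Set.Ici 1) := fun y hy x _ hyx => by
  have := (mul_log_le_stirlingMain_sub_le_mul_log (one_pos.trans_le hy) hyx).1
  nlinarith [Real.log_nonneg (Set.mem_Ici.1 hy)]

theorem abs_barnesMain_sub_le {x y : ℝ} (hy : 1 ≤ y) (hyx : y ≤ x) :
    |barnesMain x - barnesMain y| ≤ (x - y) * (x * (1 + log x)) := by
  have h := mul_le_sub_le_mul_of_hasDerivAt_of_monotoneOn (g := stirlingMain) (G := barnesMain)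
    (x := y) (h := x - y) (sub_nonneg.2 hyx)
    (fun t ht => hasDerivAt_barnesMain (by linarith [ht.1]))
    (monotoneOn_stirlingMain.mono fun t ht => hy.trans ht.1)
  rw [add_sub_cancel] at h
  have hlogy := Real.log_nonneg hy
  have hlogx := Real.log_le_log (by linarith) hyx
  rw [abs_le]
  simp only [stirlingMain] at h
  have hxlog : 0 ≤ x * log x := mul_nonneg (by linarith) (hlogy.trans hlogx)
  constructor
  · nlinarith [mul_nonneg (sub_nonneg.2 hyx) (mul_nonneg (by linarith : (0 : ℝ) ≤ y) hlogy)]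
  · nlinarith [mul_nonneg (sub_nonneg.2 hyx) (by linarith : (0 : ℝ) ≤ x)]

theorem stirlingMain_le_log_factorial {n : ℕ} (hn : n ≠ 0) :
    stirlingMain n ≤ log n.factorial := by
  have h := Stirling.le_log_factorial_stirling hn
  have hlogn : 0 ≤ log n := Real.log_nonneg (by exact_mod_cast Nat.one_le_iff_ne_zero.2 hn)
  have hlog2pi : 0 ≤ log (2 * π) := Real.log_nonneg (by linarith [Real.pi_gt_three])
  simp only [stirlingMain]
  linarith

theorem log_factorial_le_stirlingMain {n : ℕ} (hn : n ≠ 0) :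
    log n.factorial ≤ stirlingMain n + 1 + log n / 2 := by
  obtain ⟨k, rfl⟩ := Nat.exists_eq_succ_of_ne_zero hn
  have hn0 : (0 : ℝ) < (k + 1 : ℕ) := by positivity
  -- the Stirling sequence decreases from `stirlingSeq 1 = e / √2`
  have hseq : log (Stirling.stirlingSeq (k + 1)) ≤ 1 - log 2 / 2 := by
    have hle : Stirling.stirlingSeq (k + 1) ≤ Stirling.stirlingSeq 1 :=
      Stirling.stirlingSeq'_antitone (Nat.zero_le k)
    rw [Stirling.stirlingSeq_one] at hle
    calc log (Stirling.stirlingSeq (k + 1)) ≤ log (Real.exp 1 / √2) :=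
          Real.log_le_log (Stirling.stirlingSeq'_pos k) hle
      _ = 1 - log 2 / 2 := by
          rw [Real.log_div (Real.exp_ne_zero 1) (by positivity), Real.log_exp,
            Real.log_sqrt zero_le_two]
  have h := Stirling.log_stirlingSeq_formula (k + 1)
  rw [Real.log_mul two_ne_zero hn0.ne', Real.log_div hn0.ne' (Real.exp_ne_zero 1),
    Real.log_exp] at h
  simp only [stirlingMain]
  nlinarith

theorem abs_log_Gamma_sub_stirlingMain_le {x : ℝ} (hx : 2 ≤ x) :
    |log (Gamma x) - stirlingMain x| ≤ 1 + 2 * log x := by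
  set n := ⌊x⌋₊
  have hn2 : (2 : ℝ) ≤ n := by exact_mod_cast Nat.le_floor (by exact_mod_cast hx)
  have hnx : (n : ℝ) ≤ x := Nat.floor_le (by linarith)
  have hxn : x ≤ n + 1 := (Nat.lt_floor_add_one x).le
  have hn0 : n ≠ 0 := by rintro h; rw [h, Nat.cast_zero] at hn2; linarith
  have hlogn : log n ≤ log x := Real.log_le_log (by linarith) hnx
  have hlogn0 : 0 ≤ log n := Real.log_nonneg (by linarith)
  obtain ⟨hf_lo, hf_hi⟩ :=
    mul_log_le_stirlingMain_sub_le_mul_log (by linarith : (0 : ℝ) < n) hnx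
  have hmono : MonotoneOn Gamma (Set.Ici 2) := Real.Gamma_strictMonoOn_Ici.monotoneOn
  have hGx : 0 < Gamma x := Real.Gamma_pos_of_pos (by linarith)
  -- `Γ(n) ≤ Γ(x) ≤ Γ(n + 1) = n!` and `Γ(n + 1) = n Γ(n)`
  have hup : log (Gamma x) ≤ log (n.factorial : ℝ) := by
    rw [← Real.Gamma_nat_eq_factorial]
    exact Real.log_le_log hGx (hmono hx (show (2 : ℝ) ≤ n + 1 by linarith) hxn)
  have hlow : log (n.factorial : ℝ) - log n ≤ log (Gamma x) := by
    rw [← Real.Gamma_nat_eq_factorial, Real.Gamma_add_one (by positivity),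
      Real.log_mul (by positivity) (Real.Gamma_pos_of_pos (by linarith)).ne', add_sub_cancel_left]
    exact Real.log_le_log (Real.Gamma_pos_of_pos (by linarith)) (hmono hn2 hx hnx)
  have hfact_lo := stirlingMain_le_log_factorial hn0
  have hfact_hi := log_factorial_le_stirlingMain hn0
  rw [abs_le]
  constructor <;>
    nlinarith [mul_le_mul_of_nonneg_right (sub_le_iff_le_add'.2 hxn) (hlogn0.trans hlogn)]

theorem abs_sum_log_Gamma_sub_le {a m : ℝ} (ha : 2 ≤ a) (hm : 1 ≤ m) (N : ℕ) :
    |∑ j ∈ range N, log (Gamma (a + j / m)) -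
        m * (barnesMain (a + N / m) - barnesMain a)| ≤ N * (1 + 3 * log (a + N / m)) := by
  set b := a + N / m
  have hm0 : 0 < m := one_pos.trans_le hm
  have hab : a ≤ b := le_add_of_nonneg_right (by positivity)
  have hlog_b : 0 ≤ log b := Real.log_nonneg (by linarith)
  have hGamma : |∑ j ∈ range N, log (Gamma (a + j / m)) -
      ∑ j ∈ range N, stirlingMain (a + j / m)| ≤ N * (1 + 2 * log b) := by
    rw [← Finset.sum_sub_distrib]
    calc _ ≤ ∑ j ∈ range N,
          |log (Gamma (a + j / m)) - stirlingMain (a + j / m)| :=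
          Finset.abs_sum_le_sum_abs _ _
      _ ≤ ∑ _j ∈ range N, (1 + 2 * log b) := Finset.sum_le_sum fun j hj => by
          have hj : (j : ℝ) ≤ N := by exact_mod_cast (Finset.mem_range.1 hj).le
          have hx : 2 ≤ a + j / m := le_add_of_le_of_nonneg ha (by positivity)
          have hxb : log (a + j / m) ≤ log b :=
            Real.log_le_log (by linarith) (by simp only [b]; gcongr)
          exact (abs_log_Gamma_sub_stirlingMain_le hx).trans (by linarith)
      _ = N * (1 + 2 * log b) := by simp [mul_add]
  obtain ⟨hsum_lo, hsum_hi⟩ := sum_le_mul_sub_le_sum_add hm0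
    (fun y hy => hasDerivAt_barnesMain (by linarith)) (a := a)
    (monotoneOn_stirlingMain.mono (Set.Ici_subset_Ici.2 (by linarith))) N
  have hstep : stirlingMain b - stirlingMain a ≤ N * log b := by
    have h := (mul_log_le_stirlingMain_sub_le_mul_log (by linarith) hab).2
    have hNm : N / m ≤ (N : ℝ) := div_le_self (by positivity) hm
    rw [show b - a = N / m by ring] at h
    nlinarith
  rw [abs_le] at hGamma ⊢
  constructor <;> nlinarith [hGamma.1, hGamma.2]

theorem isBigO_natCast_mul_one_add_log {u : ℕ → ℝ} {κ : ℝ}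
    (hu : ∀ᶠ N in atTop, 1 ≤ u N ∧ u N ≤ κ * N) :
    (fun N : ℕ => (N : ℝ) * (1 + log (u N))) =O[atTop] (fun N : ℕ => (N : ℝ) * log N) := by
  refine (isBigO_refl (fun N : ℕ => (N : ℝ)) atTop).mul (IsBigO.of_bound (2 + |log κ|) ?_)
  filter_upwards [hu, eventually_ge_atTop 3] with N ⟨hu1, huκ⟩ hN
  have hN3 : (3 : ℝ) ≤ N := by exact_mod_cast hN
  have hlogN : 1 ≤ log N := by
    rw [Real.le_log_iff_exp_le (by linarith)]
    linarith [Real.exp_one_lt_d9]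
  have hκN : κ * N ≠ 0 := (by linarith : 0 < κ * N).ne'
  have hlog_u : log (u N) ≤ log κ + log N := by
    rw [← Real.log_mul (left_ne_zero_of_mul hκN) (right_ne_zero_of_mul hκN)]
    exact Real.log_le_log (by linarith) huκ
  rw [Real.norm_of_nonneg (by linarith [Real.log_nonneg hu1]), Real.norm_of_nonneg (by linarith)]
  nlinarith [le_abs_self (log κ), abs_nonneg (log κ)]

theorem isBigO_sum_log_Gamma {a b : ℕ → ℝ} {m κ : ℝ} (hm : 1 ≤ m)
    (hab : ∀ N, a N + N / m = b N)
    (h : ∀ᶠ N in atTop, 2 ≤ a N ∧ b N ≤ κ * N) :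
    (fun N : ℕ => ∑ j ∈ range N, log (Gamma (a N + j / m)) -
        m * (barnesMain (b N) - barnesMain (a N)))
      =O[atTop] (fun N : ℕ => (N : ℝ) * log N) := by
  have hb : ∀ᶠ N in atTop, 2 ≤ b N ∧ b N ≤ κ * N := h.mono fun N hN =>
    ⟨hN.1.trans ((hab N) ▸ le_add_of_nonneg_right (by positivity)), hN.2⟩
  refine IsBigO.trans (IsBigO.of_bound 3 ?_)
    (isBigO_natCast_mul_one_add_log (hb.mono fun N hN => ⟨by linarith [hN.1], hN.2⟩))
  filter_upwards [h, hb] with N hN hbN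
  have hlog := Real.log_nonneg (by linarith [hbN.1] : (1 : ℝ) ≤ b N)
  have := abs_sum_log_Gamma_sub_le hN.1 hm N
  rw [hab] at this
  rw [Real.norm_eq_abs, Real.norm_of_nonneg (by positivity)]
  nlinarith [(Nat.cast_nonneg N : (0 : ℝ) ≤ N)]

theorem isBigO_natCast_mul_log_Gamma_sub {u : ℕ → ℝ} {κ : ℝ}
    (h : ∀ᶠ N in atTop, 2 ≤ u N ∧ u N ≤ κ * N) :
    (fun N : ℕ => (N : ℝ) * (log (Gamma (u N)) - stirlingMain (u N)))
      =O[atTop] (fun N : ℕ => (N : ℝ) * log N) := by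
  refine IsBigO.trans (IsBigO.of_bound 2 ?_)
    (isBigO_natCast_mul_one_add_log (h.mono fun N hN => ⟨by linarith [hN.1], hN.2⟩))
  filter_upwards [h] with N hN
  have hlog := Real.log_nonneg (by linarith [hN.1] : (1 : ℝ) ≤ u N)
  rw [Real.norm_eq_abs, Real.norm_of_nonneg (by positivity), abs_mul, Nat.abs_cast]
  nlinarith [abs_log_Gamma_sub_stirlingMain_le hN.1, (Nat.cast_nonneg N : (0 : ℝ) ≤ N)]

theorem isBigO_barnesMain_sub {r δ : ℝ} (hr : 0 < r) (hδ : 0 ≤ δ) :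
    (fun N : ℕ => barnesMain (r * N) - barnesMain (r * N - δ))
      =O[atTop] (fun N : ℕ => (N : ℝ) * log N) := by
  have hlarge : ∀ᶠ N : ℕ in atTop, 1 + δ ≤ r * N :=
    (tendsto_natCast_atTop_atTop.const_mul_atTop hr).eventually_ge_atTop _
  refine IsBigO.trans (IsBigO.of_bound (δ * r) ?_)
    (isBigO_natCast_mul_one_add_log (κ := r) (hlarge.mono fun N hN => ⟨by linarith, le_rfl⟩))
  filter_upwards [hlarge] with N hN
  have hlog := Real.log_nonneg (by linarith : (1 : ℝ) ≤ r * N)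
  have := abs_barnesMain_sub_le (by linarith : 1 ≤ r * N - δ)
    (by linarith : r * N - δ ≤ r * N)
  rw [Real.norm_eq_abs, Real.norm_of_nonneg (by positivity)]
  calc _ ≤ _ := this
    _ = δ * r * (N * (1 + log (r * N))) := by ring

theorem log_pNN {c : ℝ} (hc : 0 < c) (N : ℕ) :
    log (pNN c N) = ∑ j ∈ range N, log (Gamma (c * N + j)) +
      ∑ j ∈ range N, log (Gamma (c * N / 2 + j / 2)) -
      ∑ j ∈ range N, log (Gamma ((c + 1 / 2) * N - 1 / 2 + j / 2)) -
      N * log (Gamma (c * N / 2)) := by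
  have hpNN : pNN c N = ∏ j ∈ range N, Gamma (c * N + j) * Gamma (c * N / 2 + j / 2) /
      (Gamma ((c + 1 / 2) * N - 1 / 2 + j / 2) * Gamma (c * N / 2)) := by
    refine Finset.prod_congr rfl fun j _ => ?_
    rw [show (c * N + j) / 2 = c * N / 2 + j / 2 by ring,
      show c * N + ((N : ℝ) + j - 1) / 2 = (c + 1 / 2) * N - 1 / 2 + j / 2 by ring]
  have hpos : ∀ j ∈ range N, 0 < Gamma (c * N + j) ∧ 0 < Gamma (c * N / 2 + j / 2) ∧
      0 < Gamma ((c + 1 / 2) * N - 1 / 2 + j / 2) ∧ 0 < Gamma (c * N / 2) := fun j hj => by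
    have hN : (1 : ℝ) ≤ N := by exact_mod_cast Nat.one_le_of_lt (Finset.mem_range.1 hj)
    have hcN : 0 < c * N := by positivity
    refine ⟨Real.Gamma_pos_of_pos ?_, Real.Gamma_pos_of_pos ?_, Real.Gamma_pos_of_pos ?_,
      Real.Gamma_pos_of_pos ?_⟩ <;> nlinarith [(Nat.cast_nonneg j : (0 : ℝ) ≤ j)]
  rw [hpNN, Real.log_prod fun j hj => ?_]
  · calc _ = ∑ j ∈ range N, (log (Gamma (c * N + j)) + log (Gamma (c * N / 2 + j / 2)) -
          log (Gamma ((c + 1 / 2) * N - 1 / 2 + j / 2)) - log (Gamma (c * N / 2))) :=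
          Finset.sum_congr rfl fun j hj => by
            obtain ⟨h₁, h₂, h₃, h₄⟩ := hpos j hj
            rw [Real.log_div (by positivity) (by positivity), Real.log_mul h₁.ne' h₂.ne',
              Real.log_mul h₃.ne' h₄.ne']
            ring
      _ = _ := by
          simp only [Finset.sum_sub_distrib, Finset.sum_add_distrib, Finset.sum_const,
            Finset.card_range, nsmul_eq_mul]
  · obtain ⟨h₁, h₂, h₃, h₄⟩ := hpos j hj
    positivity

theorem barnesMain_mul (r t : ℝ) :
    barnesMain (r * t) = t ^ 2 * barnesMain r + (r * t) ^ 2 / 2 * log t := by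
  rcases eq_or_ne r 0 with rfl | hr
  · simp [barnesMain]
  rcases eq_or_ne t 0 with rfl | ht
  · simp [barnesMain]
  simp only [barnesMain, Real.log_mul hr ht]
  ring

theorem stirlingMain_mul (r t : ℝ) :
    stirlingMain (r * t) = t * stirlingMain r + r * t * log t := by
  rcases eq_or_ne r 0 with rfl | hr
  · simp [stirlingMain]
  rcases eq_or_ne t 0 with rfl | ht
  · simp [stirlingMain]
  simp only [stirlingMain, Real.log_mul hr ht]
  ring

theorem barnesMain_combination_eq {c : ℝ} (hc : 0 < c) (t : ℝ) :
    (barnesMain ((c + 1) * t) - barnesMain (c * t)) +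
      2 * (barnesMain ((c + 1) * t / 2) - barnesMain (c * t / 2)) -
      2 * (barnesMain ((c + 1) * t) - barnesMain ((c + 1 / 2) * t)) -
      t * stirlingMain (c * t / 2) = t ^ 2 * exponent c := by
  simp only [mul_div_right_comm _ t, barnesMain_mul, stirlingMain_mul]
  simp only [barnesMain, stirlingMain, exponent,
    Real.log_div (by positivity : c + 1 ≠ 0) two_ne_zero, Real.log_div hc.ne' two_ne_zero]
  ring

/-- With `L = cN`, `c > 0` fixed, `log p_{N,N} = N² exponent(c) + O(N log N)` as `N → ∞`. -/
theorem log_pNN_asymptotics (c : ℝ) (hc : 0 < c) :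
    (fun N : ℕ => Real.log (pNN c N) - (N : ℝ) ^ 2 * exponent c)
      =O[Filter.atTop] (fun N : ℕ => (N : ℝ) * Real.log N) := by
  have hlarge : ∀ᶠ N : ℕ in atTop, 4 ≤ c * N :=
    (tendsto_natCast_atTop_atTop.const_mul_atTop hc).eventually_ge_atTop _
  have hN : ∀ᶠ N : ℕ in atTop, 4 ≤ c * N ∧ (0 : ℝ) ≤ N :=
    hlarge.mono fun N h => ⟨h, N.cast_nonneg⟩
  have hA := isBigO_sum_log_Gamma (a := fun N => c * N) (b := fun N => (c + 1) * N) (κ := c + 1)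
    le_rfl (fun N => by ring) (hN.mono fun N h => ⟨by linarith, le_rfl⟩)
  have hB := isBigO_sum_log_Gamma (a := fun N => c * N / 2) (b := fun N => (c + 1) * N / 2)
    (κ := c + 1) one_le_two (fun N => by ring) (hN.mono fun N h => ⟨by linarith, by nlinarith⟩)
  have hC := isBigO_sum_log_Gamma (a := fun N => (c + 1 / 2) * N - 1 / 2)
    (b := fun N => (c + 1) * N - 1 / 2) (κ := c + 1) one_le_two (fun N => by ring)
    (hN.mono fun N h => ⟨by nlinarith, by linarith⟩)
  have hD := isBigO_natCast_mul_log_Gamma_sub (u := fun N => c * N / 2) (κ := c)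
    (hN.mono fun N h => ⟨by linarith, by linarith⟩)
  have hE₁ := isBigO_barnesMain_sub (by positivity : 0 < c + 1) (one_half_pos.le)
  have hE₂ := isBigO_barnesMain_sub (by positivity : 0 < c + 1 / 2) (one_half_pos.le)
  simp only [div_one, one_mul] at hA
  refine ((((hA.add hB).sub hC).sub hD).add (hE₁.const_mul_left 2) |>.sub
    (hE₂.const_mul_left 2)).congr_left fun N => ?_
  rw [log_pNN hc, ← barnesMain_combination_eq hc]
  ring
end
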